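/- Let a, b ∈ ℝ with b² < a². Then there exist m, n ∈ ℝ such that the function F = G1 + m·C1 + n·C2 : ℝ^6 → ℝ has vanishing derivative at the equilibrium e = (0, 0, a, 0, 0, b), and the Hessian quadratic form of F at e is definite (either positive definite or negative definite) on the subspace W = {v ∈ ℝ^6 : dC1(e)(v) = 0 and dC2(e)(v) = 0}. (Hence F is a Lyapunov function proving the nonlinear stability of e.) -/

import Mathlib

noncomputable section

/-- Casimir `C1`. -/
def C1fun (p : Fin 6 → ℝ) : ℝ :=
  (p 0 ^ 2 + p 1 ^ 2 + p 2 ^ 2 + p 3 ^ 2 + p 4 ^ 2 + p 5 ^ 2) / 2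

/-- Casimir `C2`. -/
def C2fun (p : Fin 6 → ℝ) : ℝ := p 0 * p 3 + p 1 * p 4 + p 2 * p 5

/-- The constant of motion `G1`. -/
def G1fun (l1 l2 l3 l4 : ℝ) (p : Fin 6 → ℝ) : ℝ :=
  p 1 ^ 2 / (l1^2 - l3^2) + p 2 ^ 2 / (l1^2 - l2^2) + p 3 ^ 2 / (l1^2 - l4^2)

/-!
`F = G1 + m C1 + n C2` is a quadratic form `p ↦ pᵀ M p / 2` with `M` symmetric, so
`dF(p) = pᵀ M` and the Hessian is `M` everywhere. Criticality at `e = (0,0,a,0,0,b)` is two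
linear equations which, as `a² ≠ b²`, determine `m` and `n`; the same nondegeneracy shows that
`W = {v₂ = v₅ = 0}`. On `W` the Hessian splits into the `2 × 2` blocks `(v₀, v₃)` and
`(v₄, v₁)`, both negative definite because `λ₂² > λ₃², λ₄²`.
-/

open Matrix

section QuadraticOfBilinear

variable {E : Type*} [NormedAddCommGroup E] [NormedSpace ℝ E] {L : E →L[ℝ] E →L[ℝ] ℝ}

theorem hasFDerivAt_half_apply_self (hL : ∀ x y, L x y = L y x) (x : E) :
    HasFDerivAt (fun p => L p p / 2) (L x) x := by
  have h : HasFDerivAt (fun p => L p p) _ x :=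
    L.hasFDerivAt_of_bilinear (hasFDerivAt_id x) (hasFDerivAt_id x)
  simp_rw [div_eq_mul_inv]
  refine (h.mul_const 2⁻¹).congr_fderiv (ContinuousLinearMap.ext fun v => ?_)
  simp only [_root_.smul_apply, _root_.add_apply,
    ContinuousLinearMap.precompR_apply, ContinuousLinearMap.precompL_apply,
    ContinuousLinearMap.compL_apply, ContinuousLinearMap.comp_id, ContinuousLinearMap.id_apply,
    smul_eq_mul, hL v x]
  ring

theorem fderiv_half_apply_self (hL : ∀ x y, L x y = L y x) :
    fderiv ℝ (fun p => L p p / 2) = ⇑L :=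
  funext fun x => (hasFDerivAt_half_apply_self hL x).fderiv

theorem fderiv_fderiv_half_apply_self (hL : ∀ x y, L x y = L y x) (x : E) :
    fderiv ℝ (fderiv ℝ (fun p => L p p / 2)) x = L := by
  rw [fderiv_half_apply_self hL, L.fderiv]

end QuadraticOfBilinear

namespace Matrix

variable {ι : Type*} [Fintype ι] [DecidableEq ι]

def toBilinCLM (M : Matrix ι ι ℝ) : (ι → ℝ) →L[ℝ] (ι → ℝ) →L[ℝ] ℝ :=
  LinearMap.toContinuousLinearMap
    (LinearMap.toContinuousLinearMap.toLinearMap ∘ₗ toLinearMap₂' ℝ M)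

@[simp]
theorem toBilinCLM_apply (M : Matrix ι ι ℝ) (x y : ι → ℝ) :
    M.toBilinCLM x y = x ⬝ᵥ M *ᵥ y :=
  toLinearMap₂'_apply' M x y

theorem IsSymm.toBilinCLM_comm {M : Matrix ι ι ℝ} (hM : M.IsSymm) (x y : ι → ℝ) :
    M.toBilinCLM x y = M.toBilinCLM y x := by
  rw [toBilinCLM_apply, toBilinCLM_apply, dotProduct_mulVec, ← mulVec_transpose, hM.eq,
    dotProduct_comm]

end Matrix

theorem binary_quadratic_nonpos {m n β : ℝ} (hm : m < 0) (hdet : n ^ 2 ≤ m * β) (p q : ℝ) :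
    m * p ^ 2 + 2 * n * p * q + β * q ^ 2 ≤ 0 := by
  nlinarith [sq_nonneg (m * p + n * q), sq_nonneg q]

theorem binary_quadratic_neg {m n β p q : ℝ} (hm : m < 0) (hdet : n ^ 2 < m * β)
    (hpq : (p, q) ≠ 0) : m * p ^ 2 + 2 * n * p * q + β * q ^ 2 < 0 := by
  rcases eq_or_ne q 0 with rfl | hq
  · have hp : p ≠ 0 := by simpa using hpq
    nlinarith [sq_pos_of_ne_zero hp]
  · nlinarith [sq_pos_of_ne_zero hq, sq_nonneg (m * p + n * q)]

theorem eq_zero_of_symm_system {a b x y : ℝ} (hab : b ^ 2 < a ^ 2) (h₁ : a * x + b * y = 0)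
    (h₂ : a * y + b * x = 0) : x = 0 ∧ y = 0 := by
  have hD : a ^ 2 - b ^ 2 ≠ 0 := by linarith
  have hx : (a ^ 2 - b ^ 2) * x = 0 := by linear_combination a * h₁ - b * h₂
  have hy : (a ^ 2 - b ^ 2) * y = 0 := by linear_combination a * h₂ - b * h₁
  exact ⟨(mul_eq_zero.mp hx).resolve_left hD, (mul_eq_zero.mp hy).resolve_left hD⟩

theorem exists_critical_coeffs {a b A B C : ℝ} (hB : 0 < B) (hBA : B < A) (hBC : B < C)
    (hba : b ^ 2 < a ^ 2) :
    ∃ m n : ℝ, (2 / B + m) * a + n * b = 0 ∧ n * a + m * b = 0 ∧ m < 0 ∧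
      n ^ 2 < m * (2 / A + m) ∧ n ^ 2 < m * (2 / C + m) := by
  have hD : 0 < a ^ 2 - b ^ 2 := by linarith
  have ha : 0 < a ^ 2 := by nlinarith [sq_nonneg b]
  set m := -2 * a ^ 2 / (B * (a ^ 2 - b ^ 2))
  set n := 2 * a * b / (B * (a ^ 2 - b ^ 2))
  have hdet : ∀ X, B < X → n ^ 2 < m * (2 / X + m) := by
    intro X hX
    have hX0 : 0 < X := hB.trans hX
    have hXB : 0 < X - B := sub_pos.mpr hX
    have h : m * (2 / X + m) - n ^ 2 =
        4 * a ^ 2 * (X - B) / (B ^ 2 * X * (a ^ 2 - b ^ 2)) := by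
      simp only [m, n]
      field_simp
      ring
    have : 0 < 4 * a ^ 2 * (X - B) / (B ^ 2 * X * (a ^ 2 - b ^ 2)) := by positivity
    linarith
  refine ⟨m, n, ?_, ?_, div_neg_of_neg_of_pos (by linarith) (by positivity), hdet A hBA,
    hdet C hBC⟩
  · simp only [m, n]
    field_simp
    ring
  · simp only [m, n]
    field_simp
    ring

def swapMatrix : Matrix (Fin 6) (Fin 6) ℝ := (Equiv.addRight (3 : Fin 6)).permMatrix ℝ

theorem isSymm_swapMatrix : swapMatrix.IsSymm := by
  rw [IsSymm, swapMatrix, transpose_permMatrix,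
    show (Equiv.addRight (3 : Fin 6))⁻¹ = Equiv.addRight 3 by decide]

theorem swapMatrix_mulVec (v : Fin 6 → ℝ) :
    swapMatrix *ᵥ v = ![v 3, v 4, v 5, v 0, v 1, v 2] := by
  rw [swapMatrix, permMatrix_mulVec]
  ext i
  fin_cases i <;> rfl

def lyapunovMatrix (l1 l2 l3 l4 m n : ℝ) : Matrix (Fin 6) (Fin 6) ℝ :=
  diagonal ![0, 2 / (l1^2 - l3^2), 2 / (l1^2 - l2^2), 2 / (l1^2 - l4^2), 0, 0] + m • 1 +
    n • swapMatrix

theorem isSymm_lyapunovMatrix (l1 l2 l3 l4 m n : ℝ) : (lyapunovMatrix l1 l2 l3 l4 m n).IsSymm :=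
  ((isSymm_diagonal _).add (isSymm_one.smul m)).add (isSymm_swapMatrix.smul n)

theorem lyapunovMatrix_mulVec (l1 l2 l3 l4 m n : ℝ) (v : Fin 6 → ℝ) :
    lyapunovMatrix l1 l2 l3 l4 m n *ᵥ v =
      ![m * v 0 + n * v 3, (2 / (l1^2 - l3^2) + m) * v 1 + n * v 4,
        (2 / (l1^2 - l2^2) + m) * v 2 + n * v 5, n * v 0 + (2 / (l1^2 - l4^2) + m) * v 3,
        n * v 1 + m * v 4, n * v 2 + m * v 5] := by
  ext i
  fin_cases i <;> simp [lyapunovMatrix, add_mulVec, smul_mulVec, mulVec_diagonal,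
    swapMatrix_mulVec] <;> ring

theorem C1fun_eq_half_toBilinCLM :
    C1fun = fun p => (1 : Matrix (Fin 6) (Fin 6) ℝ).toBilinCLM p p / 2 := by
  ext p
  simp only [C1fun, toBilinCLM_apply, one_mulVec, dotProduct, Fin.sum_univ_six]
  ring

theorem C2fun_eq_half_toBilinCLM : C2fun = fun p => swapMatrix.toBilinCLM p p / 2 := by
  ext p
  simp only [C2fun, toBilinCLM_apply, swapMatrix_mulVec, dotProduct, Fin.sum_univ_six, cons_val]
  ring

theorem lyapunov_eq_half_toBilinCLM (l1 l2 l3 l4 m n : ℝ) :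
    (fun p => G1fun l1 l2 l3 l4 p + m * C1fun p + n * C2fun p) =
      fun p => (lyapunovMatrix l1 l2 l3 l4 m n).toBilinCLM p p / 2 := by
  ext p
  simp only [G1fun, C1fun, C2fun, toBilinCLM_apply, lyapunovMatrix_mulVec, dotProduct,
    Fin.sum_univ_six, cons_val]
  ring

theorem fderiv_C1fun_apply (a b : ℝ) (v : Fin 6 → ℝ) :
    fderiv ℝ C1fun ![0, 0, a, 0, 0, b] v = a * v 2 + b * v 5 := by
  rw [C1fun_eq_half_toBilinCLM, fderiv_half_apply_self isSymm_one.toBilinCLM_comm]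
  simp [dotProduct, Fin.sum_univ_six]

theorem fderiv_C2fun_apply (a b : ℝ) (v : Fin 6 → ℝ) :
    fderiv ℝ C2fun ![0, 0, a, 0, 0, b] v = a * v 5 + b * v 2 := by
  rw [C2fun_eq_half_toBilinCLM, fderiv_half_apply_self isSymm_swapMatrix.toBilinCLM_comm]
  simp [swapMatrix_mulVec, dotProduct, Fin.sum_univ_six]

theorem fderiv_lyapunov_apply (l1 l2 l3 l4 m n a b : ℝ) (v : Fin 6 → ℝ) :
    fderiv ℝ (fun p => G1fun l1 l2 l3 l4 p + m * C1fun p + n * C2fun p) ![0, 0, a, 0, 0, b] v =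
      ((2 / (l1^2 - l2^2) + m) * a + n * b) * v 2 + (n * a + m * b) * v 5 := by
  rw [lyapunov_eq_half_toBilinCLM,
    fderiv_half_apply_self (isSymm_lyapunovMatrix ..).toBilinCLM_comm,
    (isSymm_lyapunovMatrix ..).toBilinCLM_comm]
  simp only [toBilinCLM_apply, lyapunovMatrix_mulVec, dotProduct, Fin.sum_univ_six, cons_val]
  ring

theorem fderiv_fderiv_lyapunov_apply (l1 l2 l3 l4 m n : ℝ) (x v : Fin 6 → ℝ) :
    fderiv ℝ (fderiv ℝ (fun p => G1fun l1 l2 l3 l4 p + m * C1fun p + n * C2fun p)) x v v =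
      (m * v 0 ^ 2 + 2 * n * v 0 * v 3 + (2 / (l1^2 - l4^2) + m) * v 3 ^ 2) +
      (m * v 4 ^ 2 + 2 * n * v 4 * v 1 + (2 / (l1^2 - l3^2) + m) * v 1 ^ 2) +
      ((2 / (l1^2 - l2^2) + m) * v 2 ^ 2 + 2 * n * v 2 * v 5 + m * v 5 ^ 2) := by
  rw [lyapunov_eq_half_toBilinCLM,
    fderiv_fderiv_half_apply_self (isSymm_lyapunovMatrix ..).toBilinCLM_comm]
  simp only [toBilinCLM_apply, lyapunovMatrix_mulVec, dotProduct, Fin.sum_univ_six, cons_val]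
  ring

theorem G1_lyapunov_function_general
    (l1 l2 l3 l4 : ℝ) (h12 : l2 < l1) (h23 : l3 < l2) (h34 : l4 < l3)
    (s12 : 0 < l1 + l2)
    (s23 : 0 < l2 + l3) (s24 : 0 < l2 + l4)
    (a b : ℝ) (hba : b ^ 2 < a ^ 2) :
    ∃ m n : ℝ,
      fderiv ℝ (fun p => G1fun l1 l2 l3 l4 p + m * C1fun p + n * C2fun p)
          ![0, 0, a, 0, 0, b] = 0 ∧
      ((∀ v : Fin 6 → ℝ, v ≠ 0 →
          fderiv ℝ C1fun ![0, 0, a, 0, 0, b] v = 0 →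
          fderiv ℝ C2fun ![0, 0, a, 0, 0, b] v = 0 →
          0 < fderiv ℝ (fderiv ℝ (fun p => G1fun l1 l2 l3 l4 p + m * C1fun p + n * C2fun p))
                ![0, 0, a, 0, 0, b] v v) ∨
       (∀ v : Fin 6 → ℝ, v ≠ 0 →
          fderiv ℝ C1fun ![0, 0, a, 0, 0, b] v = 0 →
          fderiv ℝ C2fun ![0, 0, a, 0, 0, b] v = 0 →
          fderiv ℝ (fderiv ℝ (fun p => G1fun l1 l2 l3 l4 p + m * C1fun p + n * C2fun p))
                ![0, 0, a, 0, 0, b] v v < 0)) := by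
  have hB : 0 < l1 ^ 2 - l2 ^ 2 := by nlinarith
  have hBA : l1 ^ 2 - l2 ^ 2 < l1 ^ 2 - l3 ^ 2 := by nlinarith
  have hBC : l1 ^ 2 - l2 ^ 2 < l1 ^ 2 - l4 ^ 2 := by nlinarith
  obtain ⟨m, n, hcrit₂, hcrit₅, hm, hdetA, hdetC⟩ := exists_critical_coeffs hB hBA hBC hba
  refine ⟨m, n, ?_, Or.inr fun v hv hC1 hC2 => ?_⟩
  · ext v
    simp [fderiv_lyapunov_apply, hcrit₂, hcrit₅]
  rw [fderiv_C1fun_apply] at hC1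
  rw [fderiv_C2fun_apply] at hC2
  obtain ⟨hv₂, hv₅⟩ := eq_zero_of_symm_system hba hC1 hC2
  have hblocks : (v 0, v 3) ≠ 0 ∨ (v 4, v 1) ≠ 0 := by
    by_contra! h
    simp only [Prod.mk_eq_zero] at h
    exact hv (funext fun i => by fin_cases i <;> simp [h, hv₂, hv₅])
  rw [fderiv_fderiv_lyapunov_apply, hv₂, hv₅]
  rcases hblocks with h | h
  · linarith [binary_quadratic_neg hm hdetC h, binary_quadratic_nonpos hm hdetA.le (v 4) (v 1)]
  · linarith [binary_quadratic_nonpos hm hdetC.le (v 0) (v 3), binary_quadratic_neg hm hdetA h]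

/-- `G1 + m C1 + n C2` is a Lyapunov function for the equilibrium
`(0,0,a,0,0,b)`: its derivative vanishes there, and its Hessian is definite
(positive or negative) on `W = ker dC1(e) ∩ ker dC2(e)`. -/
theorem G1_lyapunov_function
    (l1 l2 l3 l4 : ℝ) (h12 : l2 < l1) (h23 : l3 < l2) (h34 : l4 < l3)
    (s12 : 0 < l1 + l2) (s13 : 0 < l1 + l3) (s14 : 0 < l1 + l4)
    (s23 : 0 < l2 + l3) (s24 : 0 < l2 + l4) (s34 : 0 < l3 + l4)
    (a b : ℝ) (hba : b ^ 2 < a ^ 2) :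
    ∃ m n : ℝ,
      fderiv ℝ (fun p => G1fun l1 l2 l3 l4 p + m * C1fun p + n * C2fun p)
          ![0, 0, a, 0, 0, b] = 0 ∧
      ((∀ v : Fin 6 → ℝ, v ≠ 0 →
          fderiv ℝ C1fun ![0, 0, a, 0, 0, b] v = 0 →
          fderiv ℝ C2fun ![0, 0, a, 0, 0, b] v = 0 →
          0 < fderiv ℝ (fderiv ℝ (fun p => G1fun l1 l2 l3 l4 p + m * C1fun p + n * C2fun p))
                ![0, 0, a, 0, 0, b] v v) ∨
       (∀ v : Fin 6 → ℝ, v ≠ 0 →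
          fderiv ℝ C1fun ![0, 0, a, 0, 0, b] v = 0 →
          fderiv ℝ C2fun ![0, 0, a, 0, 0, b] v = 0 →
          fderiv ℝ (fderiv ℝ (fun p => G1fun l1 l2 l3 l4 p + m * C1fun p + n * C2fun p))
                ![0, 0, a, 0, 0, b] v v < 0)) :=
  G1_lyapunov_function_general l1 l2 l3 l4 h12 h23 h34 s12 s23 s24 a b hba
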